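/- Let Q, T ⊆ List A, let AT = {[a] ++ t : a ∈ A, t ∈ T}, and assume the relevant coproducts and products exist. If the canonical morphism v_{Q, T ⊆ T∪AT} : N_{Q, T∪AT} → N_{Q,T} (which lies in E) is not an isomorphism, then there exist a ∈ A and t ∈ T such that the canonical morphism v_{Q, T ⊆ T∪{[a]++t}} : N_{Q, T∪{[a]++t}} → N_{Q,T} is not an isomorphism. -/

import Mathlib

open CategoryTheory

/-- A factorization system `(E, M)` on a category `C`. -/
structure FactSys {C : Type*} [Category C] (E M : MorphismProperty C) : Prop where
  E_iso : ∀ {X Y : C} (f : X ⟶ Y), IsIso f → E f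
  M_iso : ∀ {X Y : C} (f : X ⟶ Y), IsIso f → M f
  E_comp : ∀ {X Y Z : C} (f : X ⟶ Y) (g : Y ⟶ Z), E f → E g → E (f ≫ g)
  M_comp : ∀ {X Y Z : C} (f : X ⟶ Y) (g : Y ⟶ Z), M f → M g → M (f ≫ g)
  fact : ∀ {X Y : C} (f : X ⟶ Y), ∃ (Z : C) (e : X ⟶ Z) (m : Z ⟶ Y), E e ∧ M m ∧ e ≫ m = f
  diag : ∀ {X Y Z W : C} (e : X ⟶ Y) (m : Z ⟶ W) (u : X ⟶ Z) (v : Y ⟶ W),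
    E e → M m → e ≫ v = u ≫ m → ∃! d : Y ⟶ Z, e ≫ d = u ∧ d ≫ m = v

/-- The setting of the chosen `(E,M)`-factorizations `N Q T` of the canonical morphisms
`c_{Q,T} : ∐_Q X ⟶ ∏_T Y` induced by the language `ℓ`: for every `Q` there is a copower
`P Q` of `X` over `Q` (with injections `ι`), for every `T` a power `R T` of `Y` over `T`
(with projections `π`), and for all `Q, T` a chosen factorization
`e Q T : P Q ⟶ N Q T` in `E`, `m Q T : N Q T ⟶ R T` in `M` of `c_{Q,T}`. -/
structure Setup (A : Type) {C : Type*} [Category C] (E M : MorphismProperty C)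
    (X Y : C) (ℓ : List A → (X ⟶ Y)) where
  P : Set (List A) → C
  ι : ∀ (Q : Set (List A)) (q : List A), q ∈ Q → (X ⟶ P Q)
  hP : ∀ (Q : Set (List A)) (Z : C) (f : ∀ q : List A, q ∈ Q → (X ⟶ Z)),
    ∃! g : P Q ⟶ Z, ∀ (q : List A) (hq : q ∈ Q), ι Q q hq ≫ g = f q hq
  R : Set (List A) → C
  π : ∀ (T : Set (List A)) (t : List A), t ∈ T → (R T ⟶ Y)
  hR : ∀ (T : Set (List A)) (Z : C) (f : ∀ t : List A, t ∈ T → (Z ⟶ Y)),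
    ∃! g : Z ⟶ R T, ∀ (t : List A) (ht : t ∈ T), g ≫ π T t ht = f t ht
  N : Set (List A) → Set (List A) → C
  e : ∀ Q T : Set (List A), P Q ⟶ N Q T
  m : ∀ Q T : Set (List A), N Q T ⟶ R T
  he : ∀ Q T : Set (List A), E (e Q T)
  hm : ∀ Q T : Set (List A), M (m Q T)
  hfact : ∀ (Q T : Set (List A)) (q : List A) (hq : q ∈ Q) (t : List A) (ht : t ∈ T),
    ι Q q hq ≫ e Q T ≫ m Q T ≫ π T t ht = ℓ (q ++ t)

namespace Setup

variable {A : Type} {C : Type*} [Category C] {E M : MorphismProperty C}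
  {X Y : C} {ℓ : List A → (X ⟶ Y)}

/-- `u` is the canonical morphism `u_{Q⊆Q',T} : N Q T ⟶ N Q' T`:
it satisfies `u ∘ e_{Q,T} = e_{Q',T} ∘ (canonical inclusion)` and
`m_{Q',T} ∘ u = m_{Q,T}`. -/
def IsU (S : Setup A E M X Y ℓ) {Q Q' : Set (List A)} (T : Set (List A))
    (h : Q ⊆ Q') (u : S.N Q T ⟶ S.N Q' T) : Prop :=
  (∀ (q : List A) (hq : q ∈ Q),
    S.ι Q q hq ≫ S.e Q T ≫ u = S.ι Q' q (h hq) ≫ S.e Q' T) ∧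
  u ≫ S.m Q' T = S.m Q T

/-- `v` is the canonical morphism `v_{Q,T⊆T'} : N Q T' ⟶ N Q T`:
it satisfies `v ∘ e_{Q,T'} = e_{Q,T}` and
`m_{Q,T} ∘ v = (canonical restriction) ∘ m_{Q,T'}`. -/
def IsV (S : Setup A E M X Y ℓ) {T T' : Set (List A)} (Q : Set (List A))
    (h : T ⊆ T') (v : S.N Q T' ⟶ S.N Q T) : Prop :=
  (S.e Q T' ≫ v = S.e Q T) ∧
  (∀ (t : List A) (ht : t ∈ T),
    v ≫ S.m Q T ≫ S.π T t ht = S.m Q T' ≫ S.π T' t (h ht))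

end Setup

/-! Write `w` for a word `[a] ++ t` with `a ∈ A`, `t ∈ T`. The canonical morphism
`v : N_{Q,T∪AT} ⟶ N_{Q,T}` factors through `v_{Q,T⊆T∪{w}}`, so if the latter is invertible,
the `w`-th component of `m_{Q,T∪AT}` factors through `v`. Together with the components at
`t ∈ T`, which factor through `v` by definition, this makes `m_{Q,T∪AT}` factor through `v`
by a morphism restricting to `m_{Q,T}`; uniqueness of diagonal fill-ins then provides an
inverse of `v`. -/

namespace FactSys

variable {C : Type*} [Category C] {E M : MorphismProperty C}

lemma hom_ext (fs : FactSys E M) {P N N' R : C} {e : P ⟶ N} {m : N' ⟶ R}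
    (he : E e) (hm : M m) {f f' : N ⟶ N'} (h₁ : e ≫ f = e ≫ f') (h₂ : f ≫ m = f' ≫ m) : f = f' := by
  obtain ⟨d, -, huniq⟩ := fs.diag e m (e ≫ f) (f ≫ m) he hm (Category.assoc _ _ _).symm
  exact (huniq f ⟨rfl, rfl⟩).trans (huniq f' ⟨h₁.symm, h₂.symm⟩).symm

lemma isIso_of_comp_eq (fs : FactSys E M) {P N N' R R' : C} {e : P ⟶ N} {e' : P ⟶ N'}
    {m : N ⟶ R} {m' : N' ⟶ R'} (he : E e) (he' : E e') (hm : M m) (hm' : M m')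
    {v : N' ⟶ N} {g : N ⟶ R'} {r : R' ⟶ R} (hv : e' ≫ v = e) (hvg : v ≫ g = m')
    (hgr : g ≫ r = m) : IsIso v := by
  have hsq : e ≫ g = e' ≫ m' := by rw [← hv, Category.assoc, hvg]
  obtain ⟨d, ⟨hd₁, hd₂⟩, -⟩ := fs.diag e m' e' g he hm' hsq
  refine ⟨d, fs.hom_ext he' hm' ?_ ?_, fs.hom_ext he hm ?_ ?_⟩
  · rw [reassoc_of% hv, hd₁, Category.comp_id]
  · rw [Category.assoc, hd₂, hvg, Category.id_comp]
  · rw [reassoc_of% hd₁, hv, Category.comp_id]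
  · rw [← hgr, Category.assoc, reassoc_of% hvg, reassoc_of% hd₂, Category.id_comp]

end FactSys

namespace Setup

variable {A : Type} {C : Type*} [Category C] {E M : MorphismProperty C}
  {X Y : C} {ℓ : List A → (X ⟶ Y)} (S : Setup A E M X Y ℓ)

lemma P_hom_ext {Q : Set (List A)} {Z : C} {f g : S.P Q ⟶ Z}
    (h : ∀ (q : List A) (hq : q ∈ Q), S.ι Q q hq ≫ f = S.ι Q q hq ≫ g) : f = g :=
  (S.hP Q Z fun q hq => S.ι Q q hq ≫ g).unique h fun _ _ => rfl

lemma R_hom_ext {T : Set (List A)} {Z : C} {f g : Z ⟶ S.R T}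
    (h : ∀ (t : List A) (ht : t ∈ T), f ≫ S.π T t ht = g ≫ S.π T t ht) : f = g :=
  (S.hR T Z fun t ht => g ≫ S.π T t ht).unique h fun _ _ => rfl

noncomputable def lift (T : Set (List A)) {Z : C} (f : ∀ t : List A, t ∈ T → (Z ⟶ Y)) :
    Z ⟶ S.R T :=
  (S.hR T Z f).exists.choose

@[simp]
lemma lift_π (T : Set (List A)) {Z : C} (f : ∀ t : List A, t ∈ T → (Z ⟶ Y)) (t : List A)
    (ht : t ∈ T) : S.lift T f ≫ S.π T t ht = f t ht :=
  (S.hR T Z f).exists.choose_spec t ht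

noncomputable def res {T T' : Set (List A)} (h : T ⊆ T') : S.R T' ⟶ S.R T :=
  S.lift T fun t ht => S.π T' t (h ht)

@[simp]
lemma res_π {T T' : Set (List A)} (h : T ⊆ T') (t : List A) (ht : t ∈ T) :
    S.res h ≫ S.π T t ht = S.π T' t (h ht) :=
  S.lift_π T _ t ht

lemma e_m_res (Q : Set (List A)) {T T' : Set (List A)} (h : T ⊆ T') :
    S.e Q T' ≫ S.m Q T' ≫ S.res h = S.e Q T ≫ S.m Q T := by
  refine S.R_hom_ext fun t ht => S.P_hom_ext fun q hq => ?_
  simp only [Category.assoc, res_π, hfact]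

lemma IsV.comp {Q T T₁ T' : Set (List A)} {h₁ : T ⊆ T₁} {h₂ : T₁ ⊆ T'}
    {v₁ : S.N Q T₁ ⟶ S.N Q T} {w : S.N Q T' ⟶ S.N Q T₁} (hv₁ : S.IsV Q h₁ v₁)
    (hw : S.IsV Q h₂ w) : S.IsV Q (h₁.trans h₂) (w ≫ v₁) :=
  ⟨by rw [reassoc_of% hw.1, hv₁.1], fun t ht => by rw [Category.assoc, hv₁.2, hw.2]⟩

lemma exists_isV (fs : FactSys E M) (Q : Set (List A)) {T T' : Set (List A)} (h : T ⊆ T') :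
    ∃ v, S.IsV Q h v := by
  obtain ⟨d, ⟨hd₁, hd₂⟩, -⟩ := fs.diag (S.e Q T') (S.m Q T) (S.e Q T)
    (S.m Q T' ≫ S.res h) (S.he Q T') (S.hm Q T) (S.e_m_res Q h)
  exact ⟨d, hd₁, fun t ht => by rw [reassoc_of% hd₂, res_π]⟩

lemma isV_unique (fs : FactSys E M) {Q T T' : Set (List A)} {h : T ⊆ T'}
    {v v' : S.N Q T' ⟶ S.N Q T} (hv : S.IsV Q h v) (hv' : S.IsV Q h v') : v = v' :=
  fs.hom_ext (S.he Q T') (S.hm Q T) (hv.1.trans hv'.1.symm) <|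
    S.R_hom_ext fun t ht => by simp only [Category.assoc, hv.2, hv'.2]

lemma isIso_of_isV_of_forall_factor (fs : FactSys E M) {Q T T' : Set (List A)}
    {h : T ⊆ T'} {v : S.N Q T' ⟶ S.N Q T} (hv : S.IsV Q h v)
    (hfac : ∀ (w : List A) (hw : w ∈ T'), w ∉ T →
      ∃ g : S.N Q T ⟶ Y, v ≫ g = S.m Q T' ≫ S.π T' w hw) : IsIso v := by
  classical
  choose g hg using hfac
  let gw : ∀ w : List A, w ∈ T' → (S.N Q T ⟶ Y) := fun w hw =>
    if hwT : w ∈ T then S.m Q T ≫ S.π T w hwT else g w hw hwT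
  refine fs.isIso_of_comp_eq (S.he Q T) (S.he Q T') (S.hm Q T) (S.hm Q T') (r := S.res h)
    hv.1 (g := S.lift T' gw) ?_ ?_
  · refine S.R_hom_ext fun w hw => ?_
    by_cases hwT : w ∈ T
    · simp only [Category.assoc, lift_π, gw, dif_pos hwT, hv.2]
    · simp only [Category.assoc, lift_π, gw, dif_neg hwT, hg]
  · refine S.R_hom_ext fun t ht => ?_
    simp only [Category.assoc, res_π, lift_π, gw, dif_pos ht]

lemma exists_factor_of_isIso (fs : FactSys E M) {Q T T₁ T' : Set (List A)} {h : T ⊆ T'}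
    (h₁ : T ⊆ T₁) (h₂ : T₁ ⊆ T') {v : S.N Q T' ⟶ S.N Q T} {v₁ : S.N Q T₁ ⟶ S.N Q T}
    (hv : S.IsV Q h v) (hv₁ : S.IsV Q h₁ v₁) [IsIso v₁] (w : List A) (hw : w ∈ T₁) :
    ∃ g : S.N Q T ⟶ Y, v ≫ g = S.m Q T' ≫ S.π T' w (h₂ hw) := by
  obtain ⟨u, hu⟩ := S.exists_isV fs Q h₂
  have hvu : v = u ≫ v₁ := S.isV_unique fs hv (hv₁.comp S hu)
  exact ⟨inv v₁ ≫ S.m Q T₁ ≫ S.π T₁ w hw, by simp only [hvu, Category.assoc,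
    IsIso.hom_inv_id_assoc, hu.2]⟩

end Setup

theorem stmt18_general {A : Type} {C : Type*} [Category C]
    (E M : MorphismProperty C) (fs : FactSys E M) {X Y : C}
    (ℓ : List A → (X ⟶ Y)) (S : Setup A E M X Y ℓ)
    (Q T : Set (List A))
    (h : ∃ v : S.N Q (T ∪ {w | ∃ a : A, ∃ t ∈ T, w = [a] ++ t}) ⟶ S.N Q T,
      S.IsV Q Set.subset_union_left v ∧ ¬ IsIso v) :
    ∃ (a : A) (t : List A) (_ : t ∈ T),
      ∃ v' : S.N Q (T ∪ {[a] ++ t}) ⟶ S.N Q T,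
        S.IsV Q Set.subset_union_left v' ∧ ¬ IsIso v' := by
  obtain ⟨v, hv, hni⟩ := h
  by_contra! hiso
  refine hni (S.isIso_of_isV_of_forall_factor fs hv fun w hw hwT => ?_)
  obtain ⟨a, t, ht, rfl⟩ := hw.resolve_left hwT
  obtain ⟨v', hv'⟩ := S.exists_isV fs Q (T := T) (T' := T ∪ {[a] ++ t}) Set.subset_union_left
  have := hiso a t ht v' hv'
  exact S.exists_factor_of_isIso fs Set.subset_union_left
    (fun x hx => hx.imp id fun hx => ⟨a, t, ht, hx⟩) hv hv'
    ([a] ++ t) (Or.inr rfl)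

/-- if the canonical morphism `v_{Q, T ⊆ T∪AT} : N_{Q,T∪AT} → N_{Q,T}`
is not an isomorphism, then already for some single word `[a] ++ t` with `a ∈ A`,
`t ∈ T`, the canonical morphism `v_{Q, T ⊆ T∪{[a]++t}}` is not an isomorphism. -/
theorem stmt18 {A : Type} [Fintype A] {C : Type*} [Category C]
    (E M : MorphismProperty C) (fs : FactSys E M) {X Y : C}
    (ℓ : List A → (X ⟶ Y)) (S : Setup A E M X Y ℓ)
    (Q T : Set (List A))
    (h : ∃ v : S.N Q (T ∪ {w | ∃ a : A, ∃ t ∈ T, w = [a] ++ t}) ⟶ S.N Q T,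
      S.IsV Q Set.subset_union_left v ∧ ¬ IsIso v) :
    ∃ (a : A) (t : List A) (_ : t ∈ T),
      ∃ v' : S.N Q (T ∪ {[a] ++ t}) ⟶ S.N Q T,
        S.IsV Q Set.subset_union_left v' ∧ ¬ IsIso v' :=
  stmt18_general E M fs ℓ S Q T h
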